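/- arXiv:1510.04931 — 2 statements merged into one kernel-verified Lean document; each statement's English description precedes it below -/
import Mathlib

section
/- Let ξ be a CCS, π a policy, e⁰ ∈ E with r(e⁰) = 0, ε ∈ (0,1], ν the π-dogmatic environment for ξ, and ξ' := (1/2)·ν + (ε/2)·ξ. Then for every history h = ae_{<t} consistent with π with Γ_t > 0 and ξ(e_{<t} ∣ a_{<t}) > 0, and for every action β ∈ A with β ≠ π(h), the optimal value after deviating is bounded: V^*_{ξ'}(hβ) ≤ ε/(1+ε) < ε. -/
open scoped Classical

/-- A history: a finite alternating sequence of action–percept pairs. -/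
abbrev Hist (A E : Type*) := List (A × E)

/-- A policy maps histories to actions. -/
abbrev Policy (A E : Type*) := Hist A E → A

/-- A chronological conditional semimeasure (CCS, environment):
values in `[0,1]`, and the chronological semimeasure condition. -/
structure CCS (A E : Type*) [Fintype E] where
  val : Hist A E → ℝ
  nonneg : ∀ h, 0 ≤ val h
  le_one : ∀ h, val h ≤ 1
  chrono : ∀ (h : Hist A E) (a : A), (∑ e : E, val (h ++ [(a, e)])) ≤ val h

/-- `Gam γ t = Γ_t = ∑_{i ≥ t} γ_i`, the discount normalization factor. -/
noncomputable def Gam (γ : ℕ → ℝ) (t : ℕ) : ℝ := ∑' i : ℕ, γ (t + i)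

/-- Extend a history by a list of percepts, with actions chosen by the policy `π`. -/
def extendH {A E : Type*} (π : Policy A E) : Hist A E → List E → Hist A E
  | h, [] => h
  | h, e :: es => extendH π (h ++ [(π h, e)]) es

/-- The value `V^π_ν(ae_{<t})` of policy `π` in environment `ν` given history `h = ae_{<t}`
(with `t = h.length + 1`); `0` whenever `Γ_t ≤ 0` or `ν(e_{<t} ∣ a_{<t}) ≤ 0`. -/
noncomputable def V {A E : Type*} [Fintype E] (γ : ℕ → ℝ) (r : E → ℝ)
    (π : Policy A E) (ν : CCS A E) (h : Hist A E) : ℝ :=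
  if 0 < Gam γ (h.length + 1) ∧ 0 < ν.val h then
    (1 / (Gam γ (h.length + 1) * ν.val h)) *
      ∑' n : ℕ, γ (h.length + 1 + n) *
        ∑ es : Fin (n + 1) → E,
          r (es (Fin.last n)) * ν.val (extendH π h (List.ofFn es))
  else 0

/-- The value `V^π_ν(h a)` of a history ending in the action `a`:
the action at time `t` is `a`, and `π` is followed from time `t+1` on. -/
noncomputable def Vact {A E : Type*} [Fintype E] (γ : ℕ → ℝ) (r : E → ℝ)
    (π : Policy A E) (ν : CCS A E) (h : Hist A E) (a : A) : ℝ :=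
  V γ r (fun h' => if h' = h then a else π h') ν h

/-- The optimal value `V^*_ν(h) = sup_π V^π_ν(h)`. -/
noncomputable def VOpt {A E : Type*} [Fintype E] (γ : ℕ → ℝ) (r : E → ℝ)
    (ν : CCS A E) (h : Hist A E) : ℝ :=
  ⨆ π : Policy A E, V γ r π ν h

/-- The optimal value `V^*_ν(h a)` of a history ending in an action. -/
noncomputable def VOptAct {A E : Type*} [Fintype E] (γ : ℕ → ℝ) (r : E → ℝ)
    (ν : CCS A E) (h : Hist A E) (a : A) : ℝ :=
  ⨆ π : Policy A E, Vact γ r π ν h a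

/-- A history is consistent with `π` iff each of its actions is the one chosen by `π`. -/
def Consistent {A E : Type*} (π : Policy A E) (h : Hist A E) : Prop :=
  ∀ (k : ℕ) (hk : k < h.length), (h.get ⟨k, hk⟩).1 = π (h.take k)

/-- Auxiliary function for the dogmatic environment: `pre` is the consistent
prefix processed so far, the second argument is the rest of the history. -/
noncomputable def dogmaAux {A E : Type*} [Fintype E] (ξ : CCS A E) (π : Policy A E)
    (e0 : E) : Hist A E → Hist A E → ℝ
  | pre, [] => ξ.val pre
  | pre, (a, e) :: rest =>
    if a = π pre then dogmaAux ξ π e0 (pre ++ [(a, e)]) rest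
    else if e = e0 ∧ ∀ p ∈ rest, p.2 = e0 then ξ.val pre else 0

/-- The `π`-dogmatic environment for `ξ`: mimics `ξ` while the actions follow `π`;
from the first deviation on it deterministically emits `e0` and freezes the mass. -/
noncomputable def dogma {A E : Type*} [Fintype E] (ξ : CCS A E) (π : Policy A E)
    (e0 : E) (h : Hist A E) : ℝ :=
  dogmaAux ξ π e0 [] h

/-- A CCS has full support iff it is positive on every history. -/
def FullSupport {A E : Type*} [Fintype E] (ξ : CCS A E) : Prop :=
  ∀ h : Hist A E, 0 < ξ.val h

/-! On a `π`-consistent history `h` the dogmatic `ν` agrees with `ξ`, so `ξ'(h) = (1+ε)/2 · ξ(h)`.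
After a deviation `ν` only ever emits the reward-free percept `e0`, so all reward comes from the
`ε/2 · ξ` part of `ξ'`; by the chronological semimeasure property the discounted reward that `ξ`
can yield from `h` is at most `Γ_t · ξ(h)`. Hence the value is at most
`(ε/2) Γ_t ξ(h) / (Γ_t (1+ε)/2 ξ(h)) = ε/(1+ε)`. -/

section Dogma
variable {A E : Type*} [Fintype E]

lemma dogmaAux_append_of_consistent (ξ : CCS A E) (π : Policy A E) (e0 : E) :
    ∀ (pre c rest : Hist A E), Consistent (fun c' => π (pre ++ c')) c →
      dogmaAux ξ π e0 pre (c ++ rest) = dogmaAux ξ π e0 (pre ++ c) rest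
  | pre, [], rest, _ => by simp
  | pre, (a, e) :: c, rest, hc => by
      have ha : a = π pre := by simpa using hc 0 (by simp)
      have hc' : Consistent (fun c' => π (pre ++ [(a, e)] ++ c')) c := fun k hk => by
        simpa using hc (k + 1) (by simpa using hk)
      simpa [dogmaAux, ha] using
        dogmaAux_append_of_consistent ξ π e0 (pre ++ [(a, e)]) c rest hc'

lemma dogma_eq_of_consistent (ξ : CCS A E) {π : Policy A E} (e0 : E) {h : Hist A E}
    (hcons : Consistent π h) : dogma ξ π e0 h = ξ.val h := by
  simpa [dogma, dogmaAux] using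
    dogmaAux_append_of_consistent ξ π e0 [] h [] (by simpa using hcons)

lemma dogma_append_cons_of_ne (ξ : CCS A E) {π : Policy A E} (e0 : E) {h : Hist A E}
    (hcons : Consistent π h) {a : A} (ha : a ≠ π h) (e : E) (c : Hist A E) :
    dogma ξ π e0 (h ++ (a, e) :: c) =
      if e = e0 ∧ ∀ p ∈ c, p.2 = e0 then ξ.val h else 0 := by
  rw [dogma, dogmaAux_append_of_consistent ξ π e0 [] h _ (by simpa using hcons)]
  simp [dogmaAux, ha]

end Dogma

section Extend
variable {A E : Type*}

lemma extendH_eq_append (p : Policy A E) :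
    ∀ (h : Hist A E) (l : List E), ∃ c : Hist A E, extendH p h l = h ++ c ∧ c.map Prod.snd = l
  | h, [] => ⟨[], by simp [extendH]⟩
  | h, e :: l => by
      obtain ⟨c, hext, hsnd⟩ := extendH_eq_append p (h ++ [(p h, e)]) l
      exact ⟨(p h, e) :: c, by simp [extendH, hext], by simp [hsnd]⟩

lemma CCS.sum_extendH_le [Fintype E] (ξ : CCS A E) (p : Policy A E) :
    ∀ (n : ℕ) (h : Hist A E), ∑ es : Fin n → E, ξ.val (extendH p h (List.ofFn es)) ≤ ξ.val h
  | 0, h => by simp [extendH]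
  | n + 1, h => calc
      ∑ es : Fin (n + 1) → E, ξ.val (extendH p h (List.ofFn es))
        = ∑ e : E, ∑ es : Fin n → E, ξ.val (extendH p (h ++ [(p h, e)]) (List.ofFn es)) := by
          rw [← Fintype.sum_prod_type', ← (Fin.consEquiv fun _ => E).sum_comp]
          simp [Fin.consEquiv, extendH]
      _ ≤ ∑ e : E, ξ.val (h ++ [(p h, e)]) :=
          Finset.sum_le_sum fun e _ => ξ.sum_extendH_le p n _
      _ ≤ ξ.val h := ξ.chrono h (p h)

end Extend

lemma reward_mul_dogma_extendH_of_ne {A E : Type*} [Fintype E] {r : E → ℝ} (ξ : CCS A E)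
    {π p : Policy A E} {e0 : E} (hr0 : r e0 = 0) {h : Hist A E} (hcons : Consistent π h)
    (hp : p h ≠ π h) (n : ℕ) (es : Fin (n + 1) → E) :
    r (es (Fin.last n)) * dogma ξ π e0 (extendH p h (List.ofFn es)) = 0 := by
  obtain ⟨c, hext, hsnd⟩ :=
    extendH_eq_append p (h ++ [(p h, es 0)]) (List.ofFn fun i => es i.succ)
  have hsplit : extendH p h (List.ofFn es) = h ++ (p h, es 0) :: c := by
    simp [List.ofFn_succ, extendH, hext]
  rw [hsplit, dogma_append_cons_of_ne ξ e0 hcons hp]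
  split_ifs with hsilent
  · have hlast : es (Fin.last n) ∈ es 0 :: c.map Prod.snd := by
      rw [hsnd, ← List.ofFn_succ]
      exact List.mem_ofFn.2 ⟨_, rfl⟩
    rcases List.mem_cons.1 hlast with hlast | hlast
    · rw [hlast, hsilent.1, hr0, zero_mul]
    · obtain ⟨q, hq, hqlast⟩ := List.mem_map.1 hlast
      rw [← hqlast, hsilent.2 q hq, hr0, zero_mul]
  · exact mul_zero _

section Value
variable {A E : Type*} [Fintype E] {γ : ℕ → ℝ} {r : E → ℝ}

noncomputable def rewardSeries (γ : ℕ → ℝ) (r : E → ℝ) (p : Policy A E) (f : Hist A E → ℝ)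
    (h : Hist A E) : ℝ :=
  ∑' n : ℕ, γ (h.length + 1 + n) *
    ∑ es : Fin (n + 1) → E, r (es (Fin.last n)) * f (extendH p h (List.ofFn es))

lemma V_eq_of_pos {p : Policy A E} {ν : CCS A E} {h : Hist A E}
    (hpos : 0 < Gam γ (h.length + 1) ∧ 0 < ν.val h) :
    V γ r p ν h = 1 / (Gam γ (h.length + 1) * ν.val h) * rewardSeries γ r p ν.val h :=
  if_pos hpos

lemma rewardSeries_eq_const_mul {p : Policy A E} {f g : Hist A E → ℝ} {h : Hist A E} {c : ℝ}
    (hfg : ∀ n (es : Fin (n + 1) → E),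
      r (es (Fin.last n)) * f (extendH p h (List.ofFn es)) =
        c * (r (es (Fin.last n)) * g (extendH p h (List.ofFn es)))) :
    rewardSeries γ r p f h = c * rewardSeries γ r p g h := by
  simp only [rewardSeries, ← tsum_mul_left, Finset.mul_sum, hfg]
  exact tsum_congr fun n => Finset.sum_congr rfl fun es _ => by ring

lemma rewardSeries_le (hγ0 : ∀ t, 0 ≤ γ t) (hγs : Summable γ) (hr : ∀ e, 0 ≤ r e ∧ r e ≤ 1)
    (ξ : CCS A E) (p : Policy A E) (h : Hist A E) :
    rewardSeries γ r p ξ.val h ≤ Gam γ (h.length + 1) * ξ.val h := by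
  set t := h.length + 1
  have hmass : ∀ n, ∑ es : Fin (n + 1) → E,
      r (es (Fin.last n)) * ξ.val (extendH p h (List.ofFn es)) ≤ ξ.val h := fun n =>
    (Finset.sum_le_sum fun es _ => mul_le_of_le_one_left (ξ.nonneg _) (hr _).2).trans
      (ξ.sum_extendH_le p _ h)
  have hbound : ∀ n, γ (t + n) * ∑ es : Fin (n + 1) → E,
      r (es (Fin.last n)) * ξ.val (extendH p h (List.ofFn es)) ≤ γ (t + n) * ξ.val h :=
    fun n => mul_le_mul_of_nonneg_left (hmass n) (hγ0 _)
  have hsum : Summable fun n => γ (t + n) * ξ.val h :=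
    (hγs.comp_injective (add_right_injective t)).mul_right _
  calc rewardSeries γ r p ξ.val h ≤ ∑' n, γ (t + n) * ξ.val h :=
        Summable.tsum_le_tsum hbound (hsum.of_nonneg_of_le (fun n => mul_nonneg (hγ0 _)
          (Finset.sum_nonneg fun es _ => mul_nonneg (hr _).1 (ξ.nonneg _))) hbound) hsum
    _ = Gam γ t * ξ.val h := by rw [tsum_mul_right, Gam]

end Value

theorem dogmatic_deviation_general {A E : Type*} [Fintype E]
    (γ : ℕ → ℝ) (hγ0 : ∀ t, 0 ≤ γ t) (hγs : Summable γ)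
    (r : E → ℝ) (hr : ∀ e : E, 0 ≤ r e ∧ r e ≤ 1)
    (ξ : CCS A E) (π : Policy A E) (e0 : E) (hr0 : r e0 = 0)
    (ε : ℝ) (hε0 : 0 < ε)
    (ν ξ' : CCS A E)
    (hν : ∀ h : Hist A E, ν.val h = dogma ξ π e0 h)
    (hξ' : ∀ h : Hist A E, ξ'.val h = (1 / 2) * ν.val h + (ε / 2) * ξ.val h)
    (h : Hist A E) (hcons : Consistent π h)
    (hΓ : 0 < Gam γ (h.length + 1)) (hpos : 0 < ξ.val h) :
    ∀ β : A, β ≠ π h →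
      VOptAct γ r ξ' h β ≤ ε / (1 + ε) ∧ ε / (1 + ε) < ε := by
  intro β hβ
  refine ⟨?_, by rw [div_lt_iff₀ (by linarith)]; nlinarith⟩
  have hξ'h : ξ'.val h = (1 + ε) / 2 * ξ.val h := by
    rw [hξ', hν, dogma_eq_of_consistent ξ e0 hcons]; ring
  have : Nonempty (Policy A E) := ⟨fun _ => β⟩
  refine ciSup_le fun π' => ?_
  set p : Policy A E := fun h' => if h' = h then β else π' h'
  have hp : p h ≠ π h := by simpa [p] using hβ
  have hseries : rewardSeries γ r p ξ'.val h = ε / 2 * rewardSeries γ r p ξ.val h :=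
    rewardSeries_eq_const_mul fun n es => by
      rw [hξ', hν]
      linear_combination (1 / 2) * reward_mul_dogma_extendH_of_ne ξ hr0 hcons hp n es
  rw [Vact, V_eq_of_pos ⟨hΓ, by rw [hξ'h]; positivity⟩, hseries, hξ'h]
  calc 1 / (Gam γ (h.length + 1) * ((1 + ε) / 2 * ξ.val h)) *
        (ε / 2 * rewardSeries γ r p ξ.val h)
      ≤ 1 / (Gam γ (h.length + 1) * ((1 + ε) / 2 * ξ.val h)) *
        (ε / 2 * (Gam γ (h.length + 1) * ξ.val h)) := by
        gcongr; exact rewardSeries_le hγ0 hγs hr ξ p h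
    _ = ε / (1 + ε) := by field_simp

/-- **Deviating is bad.** With `ξ' = (1/2)·ν + (ε/2)·ξ` for the `π`-dogmatic `ν`, on any
`π`-consistent history the optimal value after any deviating action is `≤ ε/(1+ε) < ε`. -/
theorem dogmatic_deviation {A E : Type*} [Fintype A] [Nonempty A] [Fintype E] [Nonempty E]
    (γ : ℕ → ℝ) (hγ0 : ∀ t, 0 ≤ γ t) (hγs : Summable γ)
    (r : E → ℝ) (hr : ∀ e : E, 0 ≤ r e ∧ r e ≤ 1)
    (ξ : CCS A E) (π : Policy A E) (e0 : E) (hr0 : r e0 = 0)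
    (ε : ℝ) (hε0 : 0 < ε) (hε1 : ε ≤ 1)
    (ν ξ' : CCS A E)
    (hν : ∀ h : Hist A E, ν.val h = dogma ξ π e0 h)
    (hξ' : ∀ h : Hist A E, ξ'.val h = (1 / 2) * ν.val h + (ε / 2) * ξ.val h)
    (h : Hist A E) (hcons : Consistent π h)
    (hΓ : 0 < Gam γ (h.length + 1)) (hpos : 0 < ξ.val h) :
    ∀ β : A, β ≠ π h →
      VOptAct γ r ξ' h β ≤ ε / (1 + ε) ∧ ε / (1 + ε) < ε :=
  dogmatic_deviation_general γ hγ0 hγs r hr ξ π e0 hr0 ε hε0 ν ξ' hν hξ' h hcons hΓ hpos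
end

section
/- (Finite lifetime: every policy is an AIXI, core construction.) Assume Γ_1 > 0, Γ_{m+1} = 0 for some m ∈ ℕ, and e⁰ ∈ E with r(e⁰) = 0. Let ξ be a CCS with full support and π any policy such that V^π_ξ(h) > 0 for every history h consistent with π of length < m. Then there exists ε' ∈ (0,1] such that, with ν the π-dogmatic environment for ξ and ξ' := (1/2)·ν + (ε'/2)·ξ, for every history h consistent with π of length < m the action π(h) is the unique ξ'-optimal action at h, i.e., V^*_{ξ'}(h·π(h)) > V^*_{ξ'}(h·β) for all β ≠ π(h). -/
/-!
Along `π` the dogmatic environment `ν` agrees with `ξ`, so `ξ'` is the positive multiple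
`(1 + ε')/2 · ξ` on every `π`-consistent history and its extensions under `π`; hence
`V^π_{ξ'}(h) = V^π_ξ(h)`. A `π`-consistent history is determined by its percepts, so there are
finitely many of length `< m`, and `V^π_ξ` has a positive lower bound `c` on them. After a
deviation from `π`, `ν` only emits the reward-free percept `e⁰`, so only the `ε'/2 · ξ` part of
`ξ'` earns reward and every deviating policy has `ξ'`-value at most `ε'/(1 + ε') < ε'`.
Taking `ε' = min 1 c` separates the two.
-/

open scoped Classical

section Histories
variable {A E : Type*} {π σ : Policy A E} {h : Hist A E}

lemma consistent_append_singleton {a : A} {e : E} :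
    Consistent π (h ++ [(a, e)]) ↔ Consistent π h ∧ a = π h := by
  constructor
  · intro hc
    refine ⟨fun k hk => ?_, by simpa using hc h.length (by simp)⟩
    simpa [List.getElem_append_left hk, List.take_append_of_le_length hk.le]
      using hc k (by simp; omega)
  · rintro ⟨hc, rfl⟩ k hk
    rcases (show k < h.length ∨ k = h.length by simp at hk; omega) with hk' | rfl
    · simpa [List.getElem_append_left hk', List.take_append_of_le_length hk'.le] using hc k hk'
    · simp

lemma extendH_append_singleton (l : List E) (e : E) :
    extendH σ h (l ++ [e]) = extendH σ h l ++ [(σ (extendH σ h l), e)] := by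
  induction l generalizing h with
  | nil => rfl
  | cons e' l ih => exact ih

lemma exists_extendH_eq_append (l : List E) :
    ∃ tl : Hist A E, extendH σ h l = h ++ tl ∧ tl.map Prod.snd = l := by
  induction l using List.reverseRecOn with
  | nil => exact ⟨[], by simp [extendH]⟩
  | append_singleton l e ih =>
    obtain ⟨tl, htl, hsnd⟩ := ih
    exact ⟨tl ++ [(σ (extendH σ h l), e)], by simp [extendH_append_singleton, htl, hsnd]⟩

lemma consistent_extendH (hc : Consistent π h) (l : List E) :
    Consistent π (extendH π h l) := by
  induction l using List.reverseRecOn with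
  | nil => exact hc
  | append_singleton l e ih =>
    rw [extendH_append_singleton]
    exact consistent_append_singleton.2 ⟨ih, rfl⟩

lemma Consistent.extendH_nil_map_snd (hc : Consistent π h) :
    extendH π [] (h.map Prod.snd) = h := by
  induction h using List.reverseRecOn with
  | nil => rfl
  | append_singleton h p ih =>
    obtain ⟨hc, hp⟩ := consistent_append_singleton.1 hc
    rw [List.map_append, List.map_singleton, extendH_append_singleton, ih hc, ← hp]

lemma finite_setOf_consistent_length_lt [Finite E] (m : ℕ) :
    {h : Hist A E | Consistent π h ∧ h.length < m}.Finite := by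
  refine ((List.finite_length_lt E m).image (extendH π [])).subset ?_
  rintro h ⟨hc, hlen⟩
  exact ⟨h.map Prod.snd, by simpa using hlen, hc.extendH_nil_map_snd⟩

end Histories

section Dogma
variable {A E : Type*} [Fintype E] (ξ : CCS A E) {π σ : Policy A E} (e0 : E) {h : Hist A E}

lemma dogma_append (hc : Consistent π h) (l : Hist A E) :
    dogma ξ π e0 (h ++ l) = dogmaAux ξ π e0 h l := by
  induction h using List.reverseRecOn generalizing l with
  | nil => rfl
  | append_singleton h p ih =>
    obtain ⟨a, e⟩ := p
    obtain ⟨hch, rfl⟩ := consistent_append_singleton.1 hc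
    rw [List.append_assoc, List.singleton_append, ih hch]
    simp [dogmaAux]

lemma dogma_of_consistent (hc : Consistent π h) : dogma ξ π e0 h = ξ.val h := by
  simpa [dogmaAux] using dogma_append ξ e0 hc []

lemma dogma_append_cons_eq_zero (hc : Consistent π h) {a : A} {e : E} (ha : a ≠ π h)
    {l : Hist A E} (hl : ∃ p ∈ (a, e) :: l, p.2 ≠ e0) :
    dogma ξ π e0 (h ++ (a, e) :: l) = 0 := by
  rw [dogma_append ξ e0 hc]
  simp only [dogmaAux, if_neg ha]
  grind

lemma reward_mul_dogma_extendH_eq_zero {r : E → ℝ} (hr0 : r e0 = 0) (hc : Consistent π h)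
    (hσ : σ h ≠ π h) {n : ℕ} (es : Fin (n + 1) → E) :
    r (es (Fin.last n)) * dogma ξ π e0 (extendH σ h (List.ofFn es)) = 0 := by
  by_cases hlast : es (Fin.last n) = e0
  · rw [hlast, hr0, zero_mul]
  obtain ⟨tl, htl, hsnd⟩ :=
    exists_extendH_eq_append (σ := σ) (h := h ++ [(σ h, es 0)]) (List.ofFn fun i => es i.succ)
  have hofn : List.ofFn es = es 0 :: List.ofFn fun i => es i.succ := List.ofFn_succ
  have hmem : es (Fin.last n) ∈ ((σ h, es 0) :: tl).map Prod.snd := by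
    rw [List.map_cons, hsnd, ← hofn]
    exact List.mem_ofFn.2 ⟨_, rfl⟩
  obtain ⟨p, hp, hp2⟩ := List.mem_map.1 hmem
  rw [hofn, show extendH σ h (es 0 :: _) = _ from htl, List.append_assoc, List.singleton_append,
    dogma_append_cons_eq_zero ξ e0 hc hσ ⟨p, hp, hp2 ▸ hlast⟩, mul_zero]

end Dogma

section Values
variable {A E : Type*} [Fintype E] {γ : ℕ → ℝ} {r : E → ℝ}

lemma sum_val_extendH_le (ν : CCS A E) (σ : Policy A E) (n : ℕ) (h : Hist A E) :
    ∑ es : Fin (n + 1) → E, ν.val (extendH σ h (List.ofFn es)) ≤ ν.val h := by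
  induction n generalizing h with
  | zero =>
    calc ∑ es : Fin 1 → E, ν.val (extendH σ h (List.ofFn es))
        = ∑ e : E, ν.val (h ++ [(σ h, e)]) :=
          Fintype.sum_equiv (Equiv.funUnique (Fin 1) E) _ _ fun _ => rfl
      _ ≤ ν.val h := ν.chrono h (σ h)
  | succ n ih =>
    calc ∑ es : Fin (n + 2) → E, ν.val (extendH σ h (List.ofFn es))
        = ∑ e : E, ∑ es : Fin (n + 1) → E,
            ν.val (extendH σ (h ++ [(σ h, e)]) (List.ofFn es)) := by
          rw [← Fintype.sum_prod_type']
          exact (Fintype.sum_equiv (Fin.consEquiv fun _ => E) _ _ fun _ => by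
            simp [List.ofFn_succ, extendH]).symm
      _ ≤ ∑ e : E, ν.val (h ++ [(σ h, e)]) := Finset.sum_le_sum fun e _ => ih _
      _ ≤ ν.val h := ν.chrono h (σ h)

noncomputable def discountedReward (γ : ℕ → ℝ) (r : E → ℝ) (σ : Policy A E)
    (f : Hist A E → ℝ) (h : Hist A E) : ℝ :=
  ∑' n : ℕ, γ (h.length + 1 + n) *
    ∑ es : Fin (n + 1) → E, r (es (Fin.last n)) * f (extendH σ h (List.ofFn es))

lemma V_eq_ite (σ : Policy A E) (ν : CCS A E) (h : Hist A E) :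
    V γ r σ ν h = if 0 < Gam γ (h.length + 1) ∧ 0 < ν.val h then
      discountedReward γ r σ ν.val h / (Gam γ (h.length + 1) * ν.val h) else 0 := by
  rw [V, discountedReward, one_div_mul_eq_div]

lemma discountedReward_eq_mul {σ : Policy A E} {f g : Hist A E → ℝ} {h : Hist A E} (c : ℝ)
    (hfg : ∀ (n : ℕ) (es : Fin (n + 1) → E),
      r (es (Fin.last n)) * f (extendH σ h (List.ofFn es)) =
        c * (r (es (Fin.last n)) * g (extendH σ h (List.ofFn es)))) :
    discountedReward γ r σ f h = c * discountedReward γ r σ g h := by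
  simp only [discountedReward, hfg, ← Finset.mul_sum, ← tsum_mul_left]
  exact tsum_congr fun n => mul_left_comm _ _ _

variable (hγ0 : ∀ t, 0 ≤ γ t) (hγs : Summable γ) (hr : ∀ e : E, 0 ≤ r e ∧ r e ≤ 1)
include hγ0 hγs hr

lemma discountedReward_le (σ : Policy A E) (ν : CCS A E) (h : Hist A E) :
    discountedReward γ r σ ν.val h ≤ Gam γ (h.length + 1) * ν.val h := by
  have hsum : Summable fun n => γ (h.length + 1 + n) * ν.val h :=
    (hγs.comp_injective (add_right_injective _)).mul_right _
  have hterm (n : ℕ) :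
      ∑ es : Fin (n + 1) → E, r (es (Fin.last n)) * ν.val (extendH σ h (List.ofFn es)) ≤
        ν.val h :=
    (Finset.sum_le_sum fun _ _ => mul_le_of_le_one_left (ν.nonneg _) (hr _).2).trans
      (sum_val_extendH_le ν σ n h)
  have hle (n : ℕ) := mul_le_mul_of_nonneg_left (hterm n) (hγ0 (h.length + 1 + n))
  have hnonneg (n : ℕ) : 0 ≤ γ (h.length + 1 + n) *
      ∑ es : Fin (n + 1) → E, r (es (Fin.last n)) * ν.val (extendH σ h (List.ofFn es)) :=
    mul_nonneg (hγ0 _) (Finset.sum_nonneg fun _ _ => mul_nonneg (hr _).1 (ν.nonneg _))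
  rw [discountedReward, Gam, ← tsum_mul_right]
  exact Summable.tsum_le_tsum hle (.of_nonneg_of_le hnonneg hle hsum) hsum

lemma V_le_one (σ : Policy A E) (ν : CCS A E) (h : Hist A E) : V γ r σ ν h ≤ 1 := by
  rw [V_eq_ite]
  split_ifs with hpos
  · exact div_le_one_of_le₀ (discountedReward_le hγ0 hγs hr σ ν h) (mul_pos hpos.1 hpos.2).le
  · exact zero_le_one

lemma V_le_VOptAct_self (π : Policy A E) (ν : CCS A E) (h : Hist A E) :
    V γ r π ν h ≤ VOptAct γ r ν h (π h) := by
  have hVact : Vact γ r π ν h (π h) = V γ r π ν h := by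
    rw [Vact]
    congr
    funext h'
    split_ifs with hh <;> simp [hh]
  have hbdd : BddAbove (Set.range fun σ => Vact γ r σ ν h (π h)) :=
    ⟨1, Set.forall_mem_range.2 fun σ => V_le_one hγ0 hγs hr _ ν h⟩
  exact hVact ▸ le_ciSup hbdd π

end Values

section Scaling
variable {A E : Type*} [Fintype E] {γ : ℕ → ℝ} {r : E → ℝ} {σ : Policy A E} {ν ν' : CCS A E}
  {h : Hist A E} {c : ℝ}

lemma V_eq_of_val_eq_mul (hc : 0 < c)
    (hνν' : ∀ l : List E, ν'.val (extendH σ h l) = c * ν.val (extendH σ h l)) :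
    V γ r σ ν' h = V γ r σ ν h := by
  have hh : ν'.val h = c * ν.val h := hνν' []
  have hD : discountedReward γ r σ ν'.val h = c * discountedReward γ r σ ν.val h :=
    discountedReward_eq_mul c fun n es => by rw [hνν']; ring
  simp only [V_eq_ite, hh, hD, mul_pos_iff_of_pos_left hc]
  split_ifs with hpos
  · rw [mul_left_comm, mul_div_mul_left _ _ hc.ne']
  · rfl

lemma V_le_of_reward_mul_eq (hγ0 : ∀ t, 0 ≤ γ t) (hγs : Summable γ)
    (hr : ∀ e : E, 0 ≤ r e ∧ r e ≤ 1) (hc : 0 ≤ c)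
    (hνν' : ∀ (n : ℕ) (es : Fin (n + 1) → E),
      r (es (Fin.last n)) * ν'.val (extendH σ h (List.ofFn es)) =
        c * (r (es (Fin.last n)) * ν.val (extendH σ h (List.ofFn es)))) :
    V γ r σ ν' h ≤ c * ν.val h / ν'.val h := by
  rw [V_eq_ite]
  split_ifs with hpos
  · calc discountedReward γ r σ ν'.val h / (Gam γ (h.length + 1) * ν'.val h)
        = c * discountedReward γ r σ ν.val h / (Gam γ (h.length + 1) * ν'.val h) := by
          rw [discountedReward_eq_mul c hνν']
      _ ≤ c * (Gam γ (h.length + 1) * ν.val h) / (Gam γ (h.length + 1) * ν'.val h) := by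
          gcongr
          · exact (mul_pos hpos.1 hpos.2).le
          · exact discountedReward_le hγ0 hγs hr σ ν h
      _ = c * ν.val h / ν'.val h := by
          rw [mul_left_comm, mul_div_mul_left _ _ hpos.1.ne']
  · exact div_nonneg (mul_nonneg hc (ν.nonneg h)) (ν'.nonneg h)

end Scaling

section DogmaticMixture
variable {A E : Type*} [Fintype E] {γ : ℕ → ℝ} {r : E → ℝ} {ξ ν ξ' : CCS A E} {π : Policy A E}
  {e0 : E} {ε : ℝ} {h : Hist A E}
  (hν : ∀ h, ν.val h = dogma ξ π e0 h)
  (hξ' : ∀ h, ξ'.val h = (1 / 2) * ν.val h + (ε / 2) * ξ.val h)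
include hν hξ'

lemma V_dogmaticMixture_eq (hε : 0 ≤ ε) (hc : Consistent π h) :
    V γ r π ξ' h = V γ r π ξ h :=
  V_eq_of_val_eq_mul (c := (1 + ε) / 2) (by positivity) fun l => by
    rw [hξ', hν, dogma_of_consistent ξ e0 (consistent_extendH hc l)]
    ring

lemma VOptAct_dogmaticMixture_le (hγ0 : ∀ t, 0 ≤ γ t) (hγs : Summable γ)
    (hr : ∀ e : E, 0 ≤ r e ∧ r e ≤ 1) (hr0 : r e0 = 0) (hε : 0 < ε) (hc : Consistent π h)
    {β : A} (hβ : β ≠ π h) :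
    VOptAct γ r ξ' h β ≤ ε / (1 + ε) := by
  have hξ'h : ξ'.val h = (1 + ε) / 2 * ξ.val h := by
    rw [hξ', hν, dogma_of_consistent ξ e0 hc]
    ring
  have hbound : ε / 2 * ξ.val h / ξ'.val h ≤ ε / (1 + ε) := by
    rcases (ξ.nonneg h).eq_or_lt with h0 | hpos
    · rw [← h0, mul_zero, zero_div]
      positivity
    · rw [hξ'h, mul_div_mul_right _ _ hpos.ne', div_div_div_cancel_right₀ two_ne_zero]
  refine Real.iSup_le (fun σ => le_trans ?_ hbound) (by positivity)
  refine V_le_of_reward_mul_eq hγ0 hγs hr (by positivity) fun n es => ?_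
  have hdev := reward_mul_dogma_extendH_eq_zero ξ e0 hr0 hc
    (σ := fun h' => if h' = h then β else σ h') (by simpa using hβ) es
  rw [hξ', hν]
  linear_combination (1 / 2 : ℝ) * hdev

end DogmaticMixture

lemma Set.Finite.exists_pos_le {α : Type*} {s : Set α} (hs : s.Finite) {f : α → ℝ}
    (hf : ∀ x ∈ s, 0 < f x) : ∃ c, 0 < c ∧ ∀ x ∈ s, c ≤ f x := by
  rcases s.eq_empty_or_nonempty with rfl | hne
  · exact ⟨1, one_pos, by simp⟩
  · obtain ⟨x, hx, hmin⟩ := Set.exists_min_image s f hs hne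
    exact ⟨f x, hf x hx, hmin⟩

theorem finite_lifetime_every_policy_AIXI_general {A E : Type*} [Fintype E]
    (γ : ℕ → ℝ) (hγ0 : ∀ t, 0 ≤ γ t) (hγs : Summable γ)
    (r : E → ℝ) (hr : ∀ e : E, 0 ≤ r e ∧ r e ≤ 1)
    (m : ℕ)
    (e0 : E) (hr0 : r e0 = 0)
    (ξ : CCS A E)
    (π : Policy A E)
    (hπ : ∀ h : Hist A E, Consistent π h → h.length < m → 0 < V γ r π ξ h) :
    ∃ ε' : ℝ, 0 < ε' ∧ ε' ≤ 1 ∧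
      ∀ ν ξ' : CCS A E,
        (∀ h : Hist A E, ν.val h = dogma ξ π e0 h) →
        (∀ h : Hist A E, ξ'.val h = (1 / 2) * ν.val h + (ε' / 2) * ξ.val h) →
        ∀ h : Hist A E, Consistent π h → h.length < m →
          ∀ β : A, β ≠ π h →
            VOptAct γ r ξ' h β < VOptAct γ r ξ' h (π h) := by
  obtain ⟨c, hc0, hcV⟩ := (finite_setOf_consistent_length_lt (π := π) m).exists_pos_le
    fun h hh => hπ h hh.1 hh.2
  have hε : 0 < min 1 c := lt_min one_pos hc0
  refine ⟨min 1 c, hε, min_le_left _ _, fun ν ξ' hν hξ' h hc hlen β hβ => ?_⟩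
  calc VOptAct γ r ξ' h β
      ≤ min 1 c / (1 + min 1 c) := VOptAct_dogmaticMixture_le hν hξ' hγ0 hγs hr hr0 hε hc hβ
    _ < min 1 c := div_lt_self hε (by linarith)
    _ ≤ V γ r π ξ h := (min_le_right _ _).trans (hcV h ⟨hc, hlen⟩)
    _ = V γ r π ξ' h := (V_dogmaticMixture_eq hν hξ' hε.le hc).symm
    _ ≤ VOptAct γ r ξ' h (π h) := V_le_VOptAct_self hγ0 hγs hr π ξ' h

/-- **With finite lifetime every policy is an AIXI (core construction).** For a suitable
`ε'`, under the dogmatic mixture `ξ' = (1/2)·ν + (ε'/2)·ξ`, on every `π`-consistent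
history of length `< m` the action `π(h)` is the unique `ξ'`-optimal action. -/
theorem finite_lifetime_every_policy_AIXI {A E : Type*} [Fintype A] [Nonempty A] [Fintype E] [Nonempty E]
    (γ : ℕ → ℝ) (hγ0 : ∀ t, 0 ≤ γ t) (hγs : Summable γ)
    (r : E → ℝ) (hr : ∀ e : E, 0 ≤ r e ∧ r e ≤ 1)
    (m : ℕ) (hΓ1 : 0 < Gam γ 1) (hΓm : Gam γ (m + 1) = 0)
    (e0 : E) (hr0 : r e0 = 0)
    (ξ : CCS A E) (hfs : FullSupport ξ)
    (π : Policy A E)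
    (hπ : ∀ h : Hist A E, Consistent π h → h.length < m → 0 < V γ r π ξ h) :
    ∃ ε' : ℝ, 0 < ε' ∧ ε' ≤ 1 ∧
      ∀ ν ξ' : CCS A E,
        (∀ h : Hist A E, ν.val h = dogma ξ π e0 h) →
        (∀ h : Hist A E, ξ'.val h = (1 / 2) * ν.val h + (ε' / 2) * ξ.val h) →
        ∀ h : Hist A E, Consistent π h → h.length < m →
          ∀ β : A, β ≠ π h →
            VOptAct γ r ξ' h β < VOptAct γ r ξ' h (π h) :=
  finite_lifetime_every_policy_AIXI_general γ hγ0 hγs r hr m e0 hr0 ξ π hπ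
end
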